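/- Leader change preserves monotonicity: suppose the last output s in term t belongs to a refinement set R̄ stored at a strict majority of agents, and a new leader collects responses from a strict majority of agents. Then at least one collected response contains R̄, so the new leader's initial refinement set can be chosen to contain R̄, and (under the refinement assumption) any subsequent output s' satisfies Q(s') ≥ Q(s). -/
import Mathlib

/-- Leader change preserves monotonicity: if the refinement set `Rbar`
containing the last output `s` is stored at a strict majority of agents and
the new leader collects responses from a strict majority, then some collected
response contains `Rbar`, and any solution refined from `Rbar` is at least as
good as `s`. -/
theorem leader_change_preserves_monotonicity {Solution : Type*}
    (N : ℕ) (Q : Solution → ℝ)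
    (store : Fin N → Option (Finset Solution))
    (Rbar : Finset Solution)
    (W : Finset (Fin N)) (hW : N < 2 * W.card)
    (hstored : ∀ a ∈ W, store a = some Rbar)
    (C : Finset (Fin N)) (hC : N < 2 * C.card)
    (Refined : Finset Solution → Solution → Prop)
    (href : ∀ (R : Finset Solution) (r : Solution),
      Refined R r → ∀ s ∈ R, Q s ≤ Q r)
    (s : Solution) (hs : s ∈ Rbar) :
    (∃ a ∈ C, store a = some Rbar) ∧
      ∀ s' : Solution, Refined Rbar s' → Q s ≤ Q s' := by
  constructor
  · have hinter : (W ∩ C).Nonempty := by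
      by_contra h
      rw [Finset.not_nonempty_iff_eq_empty] at h
      have hdisj : Disjoint W C := Finset.disjoint_iff_inter_eq_empty.mpr h
      have := Finset.card_union_of_disjoint hdisj ▸ Finset.card_le_univ (W ∪ C)
      simp [Finset.card_univ] at this
      omega
    obtain ⟨a, ha⟩ := hinter
    rw [Finset.mem_inter] at ha
    exact ⟨a, ha.2, hstored a ha.1⟩
  · exact fun s' h => href Rbar s' h s hs
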